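/- arXiv:2209.07594 — 2 statements merged into one kernel-verified Lean document; each statement's English description precedes it below -/
import Mathlib

section
/- Let r ≥ 1 be an integer and G a finite simple graph. If A₀ ⊆ V(G) percolates with respect to the r-neighbour bootstrap process in G, then |A₀| ≥ |V(G)| + ⌈(e(A₀) − |E(G)|)/r⌉, where the ceiling is of the rational number (e(A₀) − |E(G)|)/r. -/
/-!
Infect the vertices of `[A₀] \ A₀` one at a time, in an order in which each of them has at least
`r` neighbours among the vertices infected before it. Each infection then adds at least `r` edges
inside the infected set, so `e(A₀) + r · |[A₀] \ A₀| ≤ e([A₀]) ≤ |E(G)|`. When `A₀` percolates,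
`|[A₀] \ A₀| = |V(G)| - |A₀|`, and dividing by `r` gives the bound.
-/

namespace BP

/-- The `r`-neighbour bootstrap closure of `A₀` in `G`: the smallest set `S` containing `A₀`
such that every vertex with at least `r` neighbours in `S` belongs to `S`. -/
def closure {V : Type*} (G : SimpleGraph V) (r : ℕ) (A₀ : Set V) : Set V :=
  ⋂₀ {S : Set V | A₀ ⊆ S ∧ ∀ v : V, r ≤ (G.neighborSet v ∩ S).ncard → v ∈ S}

/-- `A₀` percolates under the `r`-neighbour bootstrap process in `G`. -/
def Percolates {V : Type*} (G : SimpleGraph V) (r : ℕ) (A₀ : Set V) : Prop :=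
  closure G r A₀ = Set.univ

/-- The minimum cardinality of a set percolating under the `r`-neighbour process in `G`. -/
noncomputable def minPerc {V : Type*} (G : SimpleGraph V) (r : ℕ) : ℕ :=
  sInf {n : ℕ | ∃ A₀ : Set V, Percolates G r A₀ ∧ A₀.ncard = n}

/-- The number of edges of `G` having both endpoints in `A`. -/
noncomputable def eIn {V : Type*} (G : SimpleGraph V) (A : Set V) : ℕ :=
  {e ∈ G.edgeSet | ∀ v ∈ e, v ∈ A}.ncard

def InfectionClosed {V : Type*} (G : SimpleGraph V) (r : ℕ) (S : Set V) : Prop :=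
  ∀ v : V, r ≤ (G.neighborSet v ∩ S).ncard → v ∈ S

section Closure

variable {V : Type*} (G : SimpleGraph V) (r : ℕ) {A₀ S : Set V}

lemma subset_closure : A₀ ⊆ closure G r A₀ :=
  Set.subset_sInter fun _ hS ↦ hS.1

lemma closure_subset (hA₀ : A₀ ⊆ S) (hS : InfectionClosed G r S) : closure G r A₀ ⊆ S :=
  Set.sInter_subset_of_mem ⟨hA₀, hS⟩

lemma infectionClosed_closure [Finite V] : InfectionClosed G r (closure G r A₀) := by
  intro v hv
  refine Set.mem_sInter.2 fun S ⟨hA₀, hS⟩ ↦ hS v (hv.trans (Set.ncard_le_ncard ?_))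
  exact Set.inter_subset_inter_right _ (closure_subset G r hA₀ hS)

end Closure

lemma eIn_univ {V : Type*} (G : SimpleGraph V) : eIn G Set.univ = G.edgeSet.ncard := by
  simp [eIn]

section EdgeCount

variable {V : Type*} [Finite V] (G : SimpleGraph V)

lemma eIn_add_ncard_neighborSet_inter_le {B : Set V} {v : V} (hv : v ∉ B) :
    eIn G B + (G.neighborSet v ∩ B).ncard ≤ eIn G (insert v B) := by
  set old : Set (Sym2 V) := {e ∈ G.edgeSet | ∀ u ∈ e, u ∈ B}
  set new : Set (Sym2 V) := Sym2.mkEmbedding v '' (G.neighborSet v ∩ B)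
  have hnew : new.ncard = (G.neighborSet v ∩ B).ncard :=
    Set.ncard_image_of_injective _ (Sym2.mkEmbedding v).injective
  have hdisj : Disjoint old new := by
    rw [Set.disjoint_left]
    rintro e he ⟨w, -, rfl⟩
    exact hv (he.2 v (Sym2.mem_mk_left v w))
  have hsub : old ∪ new ⊆ {e ∈ G.edgeSet | ∀ u ∈ e, u ∈ insert v B} := by
    rintro e (⟨he, heB⟩ | ⟨w, ⟨hadj, hw⟩, rfl⟩)
    · exact ⟨he, fun u hu ↦ Set.mem_insert_of_mem _ (heB u hu)⟩
    · refine ⟨hadj, fun u hu ↦ ?_⟩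
      rcases Sym2.mem_iff.1 hu with rfl | rfl
      · exact Set.mem_insert _ _
      · exact Set.mem_insert_of_mem _ hw
  calc eIn G B + (G.neighborSet v ∩ B).ncard = (old ∪ new).ncard := by
        rw [Set.ncard_union_eq hdisj, hnew]; rfl
    _ ≤ eIn G (insert v B) := Set.ncard_le_ncard hsub

variable {G} {r : ℕ} {A₀ B : Set V}

lemma eIn_add_mul_ncard_insert_diff_le (hA₀ : A₀ ⊆ B) {v : V} (hv : v ∉ B)
    (hvr : r ≤ (G.neighborSet v ∩ B).ncard) (hB : eIn G A₀ + r * (B \ A₀).ncard ≤ eIn G B) :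
    eIn G A₀ + r * (insert v B \ A₀).ncard ≤ eIn G (insert v B) := by
  have hvA₀ : v ∉ A₀ := fun h ↦ hv (hA₀ h)
  have hcard : (insert v B \ A₀).ncard = (B \ A₀).ncard + 1 := by
    rw [Set.insert_sdiff_of_notMem _ hvA₀, Set.ncard_insert_of_notMem fun h ↦ hv h.1]
  calc eIn G A₀ + r * (insert v B \ A₀).ncard = eIn G A₀ + r * (B \ A₀).ncard + r := by
        rw [hcard]; ring
    _ ≤ eIn G B + (G.neighborSet v ∩ B).ncard := add_le_add hB hvr
    _ ≤ eIn G (insert v B) := eIn_add_ncard_neighborSet_inter_le G hv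

lemma eIn_add_mul_ncard_closure_diff_le :
    eIn G A₀ + r * (closure G r A₀ \ A₀).ncard ≤ eIn G (closure G r A₀) := by
  set M : Set (Set V) :=
    {B | A₀ ⊆ B ∧ B ⊆ closure G r A₀ ∧ eIn G A₀ + r * (B \ A₀).ncard ≤ eIn G B}
  have hA₀M : A₀ ∈ M := ⟨le_rfl, subset_closure G r, by simp⟩
  obtain ⟨B, ⟨hA₀B, hBcl, hB⟩, hBmax⟩ :=
    Set.Finite.exists_maximalFor Set.ncard M (Set.toFinite M) ⟨A₀, hA₀M⟩
  -- A maximal `B` is infection-closed: otherwise infecting one more vertex stays inside `M`.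
  have hBclosed : InfectionClosed G r B := by
    intro v hvr
    by_contra hv
    have hvcl : v ∈ closure G r A₀ := infectionClosed_closure G r v
      (hvr.trans (Set.ncard_le_ncard (Set.inter_subset_inter_right _ hBcl)))
    have hins : insert v B ∈ M := ⟨hA₀B.trans (Set.subset_insert _ _),
      Set.insert_subset hvcl hBcl, eIn_add_mul_ncard_insert_diff_le hA₀B hv hvr hB⟩
    have := hBmax hins (Set.ncard_le_ncard (Set.subset_insert _ _))
    rw [Set.ncard_insert_of_notMem hv] at this
    omega
  rwa [hBcl.antisymm (closure_subset G r hA₀B hBclosed)] at hB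

end EdgeCount

/-- **Theorem (Statement 3).** If `A₀` percolates for the `r`-neighbour process in a finite
graph `G`, then `|A₀| ≥ |V(G)| + ⌈(e(A₀) - |E(G)|)/r⌉`. -/
theorem percolating_general_lower_bound {V : Type*} [Fintype V] (G : SimpleGraph V)
    (r : ℕ) (hr : 1 ≤ r) (A₀ : Set V) (h : Percolates G r A₀) :
    (Fintype.card V : ℤ) + ⌈((eIn G A₀ : ℚ) - (G.edgeSet.ncard : ℚ)) / (r : ℚ)⌉
      ≤ (A₀.ncard : ℤ) := by
  have hedges : eIn G A₀ + r * A₀ᶜ.ncard ≤ G.edgeSet.ncard := by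
    have := eIn_add_mul_ncard_closure_diff_le (G := G) (r := r) (A₀ := A₀)
    rwa [h, ← Set.compl_eq_univ_sdiff, eIn_univ] at this
  have hcompl : A₀.ncard + A₀ᶜ.ncard = Fintype.card V := by
    rw [Set.ncard_add_ncard_compl, Nat.card_eq_fintype_card]
  have hceil : ⌈((eIn G A₀ : ℚ) - (G.edgeSet.ncard : ℚ)) / (r : ℚ)⌉
      ≤ (A₀.ncard : ℤ) - (Fintype.card V : ℤ) := by
    rw [Int.ceil_le, div_le_iff₀ (by exact_mod_cast hr)]
    have hedgesQ : (eIn G A₀ : ℚ) + r * A₀ᶜ.ncard ≤ G.edgeSet.ncard := by exact_mod_cast hedges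
    have hcomplQ : (A₀.ncard : ℚ) + A₀ᶜ.ncard = Fintype.card V := by exact_mod_cast hcompl
    push_cast
    rw [← hcomplQ]
    linarith
  omega

end BP
end

section
/- Let H and G be finite simple graphs, let r ≥ 1 be an integer, and let A₀ ⊆ V(H). If f is a local embedding of H into G (a graph homomorphism f : V(H) → V(G) whose restriction to the neighbourhood of each vertex of H is injective), then the image under f of the r-neighbour bootstrap closure of A₀ in H is contained in the r-neighbour bootstrap closure of f(A₀) in G; i.e., f([A₀]_{r,H}) ⊆ [f(A₀)]_{r,G}. -/
namespace BP

lemma closure_mem {V : Type*} [Finite V] (G : SimpleGraph V) (r : ℕ) (A₀ : Set V) :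
    closure G r A₀ ∈ {S : Set V | A₀ ⊆ S ∧ ∀ v : V, r ≤ (G.neighborSet v ∩ S).ncard → v ∈ S} := by
  constructor
  · intro a ha S hS
    exact hS.1 ha
  · intro v hv S hS
    apply hS.2 v
    refine le_trans ?_ (Set.ncard_le_ncard (Set.inter_subset_inter_right _ (Set.sInter_subset_of_mem hS)) (Set.toFinite _))
    exact hv

/-- **Theorem (Statement 10).** A local embedding maps the bootstrap closure into the
bootstrap closure of the image. -/
theorem local_embedding_closure {VH VG : Type*} [Fintype VH] [Fintype VG]
    (H : SimpleGraph VH) (G : SimpleGraph VG) (r : ℕ) (hr : 1 ≤ r)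
    (A₀ : Set VH) (f : VH → VG)
    (hhom : ∀ u v : VH, H.Adj u v → G.Adj (f u) (f v))
    (hloc : ∀ v : VH, Set.InjOn f (H.neighborSet v)) :
    f '' closure H r A₀ ⊆ closure G r (f '' A₀) := by
  rw [Set.image_subset_iff]
  have hcl := closure_mem G r (f '' A₀)
  apply Set.sInter_subset_of_mem
  constructor
  · intro a ha
    exact hcl.1 (Set.mem_image_of_mem f ha)
  · intro v hv
    show f v ∈ closure G r (f '' A₀)
    apply hcl.2
    refine le_trans hv ?_
    have hsub : f '' (H.neighborSet v ∩ f ⁻¹' closure G r (f '' A₀)) ⊆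
        G.neighborSet (f v) ∩ closure G r (f '' A₀) := by
      rintro x ⟨u, ⟨hu1, hu2⟩, rfl⟩
      exact ⟨hhom v u hu1, hu2⟩
    calc (H.neighborSet v ∩ f ⁻¹' closure G r (f '' A₀)).ncard
        = (f '' (H.neighborSet v ∩ f ⁻¹' closure G r (f '' A₀))).ncard := by
          rw [Set.ncard_image_of_injOn ((hloc v).mono Set.inter_subset_left)]
      _ ≤ _ := Set.ncard_le_ncard hsub (Set.toFinite _)

end BP
end
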